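/- Let S be a symmetric positive definite d×d real matrix, M a symmetric positive semidefinite d×d real matrix, and K a symmetric d×d real matrix. Then |S^{−1/2}( M + K S^{−1} K )S^{−1/2}| ≤ d · inf over skew-symmetric d×d matrices h of |S^{−1/2}( M + (K−h)ᵗ S^{−1} (K−h) )S^{−1/2}|, where |·| is the spectral norm. -/

import Mathlib

open Matrix

noncomputable section

/-- Spectral norm (ℓ²→ℓ² operator norm) of a real square matrix. -/
def specNorm {n : Type*} [Fintype n] [DecidableEq n] (A : Matrix n n ℝ) : ℝ :=
  ‖LinearMap.toContinuousLinearMap (Matrix.toEuclideanLin A)‖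

open Classical in
/-- Positive semidefinite square root; junk value `0` off the PSD cone. -/
def psdSqrt {n : Type*} [Fintype n] [DecidableEq n] (A : Matrix n n ℝ) :
    Matrix n n ℝ :=
  if h : A.PosSemidef then
    (h.1.eigenvectorUnitary : Matrix n n ℝ) * diagonal ((↑) ∘ Real.sqrt ∘ h.1.eigenvalues) *
      (star h.1.eigenvectorUnitary : Matrix n n ℝ) else 0

open scoped Matrix.Norms.L2Operator

namespace Statement16Aux

variable {d : ℕ}

lemma psdSqrt_spec {n : Type*} [Fintype n] [DecidableEq n] {A : Matrix n n ℝ}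
    (hA : A.PosSemidef) : (psdSqrt A).PosSemidef ∧ psdSqrt A * psdSqrt A = A := by
  rw [psdSqrt, dif_pos hA]
  set U := hA.1.eigenvectorUnitary
  have hU : (star U : Matrix n n ℝ) * (U : Matrix n n ℝ) = 1 :=
    congrArg Subtype.val (Unitary.star_mul_self U)
  have hstar : (star U : Matrix n n ℝ) = (U : Matrix n n ℝ)ᴴ := rfl
  constructor
  · rw [hstar]
    apply PosSemidef.mul_mul_conjTranspose_same
    rw [posSemidef_diagonal_iff]
    intro i
    simp [Real.sqrt_nonneg]
  · have hDD : diagonal (((↑) : ℝ → ℝ) ∘ Real.sqrt ∘ hA.1.eigenvalues) *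
        diagonal ((↑) ∘ Real.sqrt ∘ hA.1.eigenvalues) =
        diagonal (RCLike.ofReal ∘ hA.1.eigenvalues) := by
      rw [diagonal_mul_diagonal]
      congr 1
      funext i
      simp [Real.mul_self_sqrt (hA.eigenvalues_nonneg i)]
    conv_rhs => rw [hA.1.spectral_theorem]
    rw [Unitary.conjStarAlgAut_apply, ← hDD]
    simp only [Matrix.mul_assoc]
    rw [← Matrix.mul_assoc (star (U : Matrix n n ℝ)) (U : Matrix n n ℝ), hU, Matrix.one_mul]

lemma specNorm_eq (A : Matrix (Fin d) (Fin d) ℝ) : specNorm A = ‖A‖ := rfl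

lemma specNorm_nonneg (A : Matrix (Fin d) (Fin d) ℝ) : 0 ≤ specNorm A :=
  norm_nonneg _

lemma specNorm_le_sqrt_sum (B : Matrix (Fin d) (Fin d) ℝ) :
    specNorm B ≤ Real.sqrt (∑ i, ∑ j, (B i j) ^ 2) := by
  unfold specNorm
  refine ContinuousLinearMap.opNorm_le_bound _ (Real.sqrt_nonneg _) fun x => ?_
  have hx : ‖x‖ = Real.sqrt (∑ j, (x j) ^ 2) := by
    simpa [Real.norm_eq_abs, sq_abs] using EuclideanSpace.norm_eq x
  have hy : ‖Matrix.toEuclideanLin B x‖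
      = Real.sqrt (∑ i, (∑ j, B i j * x j) ^ 2) := by
    have := EuclideanSpace.norm_eq (Matrix.toEuclideanLin B x)
    simpa [Real.norm_eq_abs, sq_abs, Matrix.toEuclideanLin_apply, Matrix.mulVec,
      dotProduct] using this
  rw [LinearMap.coe_toContinuousLinearMap', hy, hx,
    ← Real.sqrt_mul (by positivity)]
  refine Real.sqrt_le_sqrt ?_
  calc ∑ i, (∑ j, B i j * x j) ^ 2
      ≤ ∑ i, (∑ j, (B i j) ^ 2) * (∑ j, (x j) ^ 2) :=
        Finset.sum_le_sum fun i _ => Finset.sum_mul_sq_le_sq_mul_sq _ _ _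
    _ = (∑ i, ∑ j, (B i j) ^ 2) * ∑ j, (x j) ^ 2 := by
        rw [Finset.sum_mul]

lemma diag_le_specNorm (A : Matrix (Fin d) (Fin d) ℝ) (i : Fin d) :
    A i i ≤ specNorm A := by
  set y := Matrix.toEuclideanLin A (EuclideanSpace.single i 1) with hy
  have h1 : A i i = y i := by
    simp [hy, Matrix.toEuclideanLin_apply, Matrix.mulVec, dotProduct,
      EuclideanSpace.single_apply]
  have h2 : |y i| ≤ ‖y‖ := by
    have := EuclideanSpace.norm_eq y
    rw [this]
    have : |y i| = Real.sqrt ((y i) ^ 2) := (Real.sqrt_sq_eq_abs _).symm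
    rw [this]
    refine Real.sqrt_le_sqrt ?_
    have : (y i) ^ 2 ≤ ∑ j, ‖y j‖ ^ 2 := by
      refine Finset.single_le_sum (f := fun j => ‖y j‖ ^ 2)
        (fun j _ => by positivity) (Finset.mem_univ i) |>.trans_eq' ?_
      simp [Real.norm_eq_abs, sq_abs]
    exact this
  have h3 : ‖y‖ ≤ specNorm A * ‖EuclideanSpace.single i (1:ℝ)‖ := by
    unfold specNorm
    exact (LinearMap.toContinuousLinearMap (Matrix.toEuclideanLin A)).le_opNorm _
  have h4 : ‖EuclideanSpace.single i (1:ℝ)‖ = 1 := by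
    simp [EuclideanSpace.norm_single]
  calc A i i = y i := h1
    _ ≤ |y i| := le_abs_self _
    _ ≤ ‖y‖ := h2
    _ ≤ specNorm A := by rw [h4, mul_one] at h3; exact h3

lemma trace_le_d_mul (A : Matrix (Fin d) (Fin d) ℝ) :
    A.trace ≤ (d : ℝ) * specNorm A := by
  calc A.trace = ∑ i : Fin d, A i i := by simp [Matrix.trace, Matrix.diag]
    _ ≤ ∑ _i : Fin d, specNorm A :=
        Finset.sum_le_sum fun i _ => diag_le_specNorm A i
    _ = (d : ℝ) * specNorm A := by
        simp [Finset.sum_const, Finset.card_univ, nsmul_eq_mul]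

lemma specNorm_le_trace {A : Matrix (Fin d) (Fin d) ℝ} (hA : A.PosSemidef) :
    specNorm A ≤ A.trace := by
  classical
  set B := psdSqrt A with hB
  have hBps : B.PosSemidef := (psdSqrt_spec hA).1
  have hBsymm : Bᵀ = B := by
    rw [← Matrix.conjTranspose_eq_transpose_of_trivial]; exact hBps.isHermitian
  have hBB : B * B = A := (psdSqrt_spec hA).2
  have hnorm : specNorm A = ‖B‖ * ‖B‖ := by
    rw [specNorm_eq, ← hBB, ← Matrix.l2_opNorm_conjTranspose_mul_self B]
    congr 1
    rw [Matrix.conjTranspose_eq_transpose_of_trivial, hBsymm]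
  have htr : A.trace = ∑ i, ∑ j, (B i j) ^ 2 := by
    rw [← hBB]
    simp only [Matrix.trace, Matrix.diag, Matrix.mul_apply]
    refine Finset.sum_congr rfl fun i _ => Finset.sum_congr rfl fun j _ => ?_
    have hji : B j i = Bᵀ j i := by rw [hBsymm]
    rw [hji, Matrix.transpose_apply, sq]
  have h2 : ‖B‖ ≤ Real.sqrt (∑ i, ∑ j, (B i j) ^ 2) := specNorm_le_sqrt_sum B
  have hS : (0:ℝ) ≤ ∑ i, ∑ j, (B i j) ^ 2 := by positivity
  calc specNorm A = ‖B‖ * ‖B‖ := hnorm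
    _ ≤ Real.sqrt (∑ i, ∑ j, (B i j) ^ 2) * Real.sqrt (∑ i, ∑ j, (B i j) ^ 2) :=
        mul_le_mul h2 h2 (norm_nonneg _) (Real.sqrt_nonneg _)
    _ = ∑ i, ∑ j, (B i j) ^ 2 := Real.mul_self_sqrt hS
    _ = A.trace := htr.symm

end Statement16Aux

open Statement16Aux

/-- for `S` symmetric positive definite, `M` symmetric positive
semidefinite and `K` symmetric, the uncentred spectral norm is bounded by `d` times the
infimum over skew-symmetric recenterings. -/
theorem statement16 {d : ℕ} (S M K : Matrix (Fin d) (Fin d) ℝ)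
    (hS : S.PosDef) (hM : M.PosSemidef) (hK : K.IsSymm) :
    specNorm (psdSqrt S⁻¹ * (M + K * S⁻¹ * K) * psdSqrt S⁻¹) ≤
      (d : ℝ) * sInf ((fun h : Matrix (Fin d) (Fin d) ℝ =>
        specNorm (psdSqrt S⁻¹ * (M + (K - h)ᵀ * S⁻¹ * (K - h)) * psdSqrt S⁻¹)) ''
          {h | hᵀ = -h}) := by
  classical
  have hSinv : (S⁻¹).PosDef := hS.inv
  have hSps : (S⁻¹).PosSemidef := hSinv.posSemidef
  set T := psdSqrt S⁻¹ with hTdef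
  have hTps : T.PosSemidef := (psdSqrt_spec hSps).1
  have hTsym : Tᵀ = T := by
    rw [← Matrix.conjTranspose_eq_transpose_of_trivial]; exact hTps.isHermitian
  have hTT : T * T = S⁻¹ := (psdSqrt_spec hSps).2
  -- positive semidefiniteness of the conjugated matrices
  have psd : ∀ N : Matrix (Fin d) (Fin d) ℝ,
      (T * (M + Nᵀ * S⁻¹ * N) * T).PosSemidef := by
    intro N
    have h1 : (Nᵀ * S⁻¹ * N).PosSemidef := by
      have hps := Matrix.posSemidef_conjTranspose_mul_self (T * N)
      have heq : (T * N)ᴴ * (T * N) = Nᵀ * S⁻¹ * N := by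
        rw [Matrix.conjTranspose_eq_transpose_of_trivial, Matrix.transpose_mul,
          hTsym, ← hTT]
        noncomm_ring
      rwa [heq] at hps
    have h2 := (hM.add h1).mul_mul_conjTranspose_same T
    rwa [Matrix.conjTranspose_eq_transpose_of_trivial, hTsym] at h2
  have psd0 : (T * (M + K * S⁻¹ * K) * T).PosSemidef := by
    have := psd K
    rwa [hK] at this
  -- trace inequality
  have trace_ineq : ∀ h : Matrix (Fin d) (Fin d) ℝ, hᵀ = -h →
      (T * (M + K * S⁻¹ * K) * T).trace ≤
        (T * (M + (K - h)ᵀ * S⁻¹ * (K - h)) * T).trace := by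
    intro h hh
    set X := T * h * T with hX
    have hXt : Xᵀ = -X := by
      rw [hX, Matrix.transpose_mul, Matrix.transpose_mul, hTsym, hh]
      noncomm_ring
    have key : T * (M + (K - h)ᵀ * S⁻¹ * (K - h)) * T =
        T * (M + K * S⁻¹ * K) * T +
          (T * (h * S⁻¹ * K) * T - T * (K * S⁻¹ * h) * T) + X * Xᵀ := by
      rw [Matrix.transpose_sub, hK, hh, sub_neg_eq_add, hXt, hX, ← hTT]
      noncomm_ring
    have c1 : (T * (h * S⁻¹ * K) * T).trace = (T * (K * S⁻¹ * h) * T).trace := by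
      rw [Matrix.trace_mul_cycle T (h * S⁻¹ * K) T,
        Matrix.trace_mul_cycle T (K * S⁻¹ * h) T, hTT]
      have e1 : S⁻¹ * (h * S⁻¹ * K) = (S⁻¹ * h) * (S⁻¹ * K) := by noncomm_ring
      have e2 : S⁻¹ * (K * S⁻¹ * h) = (S⁻¹ * K) * (S⁻¹ * h) := by noncomm_ring
      rw [e1, e2, Matrix.trace_mul_comm]
    have hXX : 0 ≤ (X * Xᵀ).trace := by
      have : (X * Xᵀ).trace = ∑ i, ∑ j, (X i j) ^ 2 := by
        simp [Matrix.trace, Matrix.diag, Matrix.mul_apply, sq]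
      rw [this]; positivity
    rw [key, Matrix.trace_add, Matrix.trace_add, Matrix.trace_sub, c1]
    linarith
  -- main bound for each skew-symmetric h
  have main : ∀ h : Matrix (Fin d) (Fin d) ℝ, hᵀ = -h →
      specNorm (T * (M + K * S⁻¹ * K) * T) ≤
        (d : ℝ) * specNorm (T * (M + (K - h)ᵀ * S⁻¹ * (K - h)) * T) := by
    intro h hh
    calc specNorm (T * (M + K * S⁻¹ * K) * T)
        ≤ (T * (M + K * S⁻¹ * K) * T).trace := specNorm_le_trace psd0
      _ ≤ (T * (M + (K - h)ᵀ * S⁻¹ * (K - h)) * T).trace := trace_ineq h hh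
      _ ≤ (d : ℝ) * specNorm (T * (M + (K - h)ᵀ * S⁻¹ * (K - h)) * T) :=
          trace_le_d_mul _
  have hne : ((fun h : Matrix (Fin d) (Fin d) ℝ =>
      specNorm (T * (M + (K - h)ᵀ * S⁻¹ * (K - h)) * T)) ''
        {h | hᵀ = -h}).Nonempty :=
    ⟨_, ⟨0, by simp, rfl⟩⟩
  rcases Nat.eq_zero_or_pos d with hd | hd
  · subst hd
    have h0 : T * (M + K * S⁻¹ * K) * T = 0 := by
      ext i j; exact i.elim0
    rw [h0]
    have : specNorm (0 : Matrix (Fin 0) (Fin 0) ℝ) = 0 := by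
      simp only [specNorm, map_zero, norm_zero]
    rw [this]
    simp
  · have hd' : (0:ℝ) < d := by exact_mod_cast hd
    have h1 : specNorm (T * (M + K * S⁻¹ * K) * T) / d ≤
        sInf ((fun h : Matrix (Fin d) (Fin d) ℝ =>
          specNorm (T * (M + (K - h)ᵀ * S⁻¹ * (K - h)) * T)) '' {h | hᵀ = -h}) := by
      refine le_csInf hne ?_
      rintro b ⟨h, hh, rfl⟩
      rw [div_le_iff₀ hd']
      calc specNorm (T * (M + K * S⁻¹ * K) * T)
          ≤ (d : ℝ) * specNorm (T * (M + (K - h)ᵀ * S⁻¹ * (K - h)) * T) := main h hh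
        _ = specNorm (T * (M + (K - h)ᵀ * S⁻¹ * (K - h)) * T) * d := mul_comm _ _
    rw [div_le_iff₀ hd'] at h1
    linarith
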